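/- Let f0, f1 be the automatic transformations of the Mealy automaton A₄ and let S be the semigroup of transformations they generate under composition (products written so that (f g)(u) = f(g(u))). Then every element s of S is equal, as a transformation, to a word of one of the following forms: (i) f0 f1^(2p₁) (f0 f1)^(p₂) s′ with p₁ ≥ 1, p₂ ≥ 0 and s′ ∈ {1, f1, f0, f0²}, excluding the combination p₁ = 1, p₂ = 0, s′ = 1; or (ii) f1^(p₁) (f0 f1)^(p₂) s′ with p₁ ≥ 0, p₂ ≥ 1 and s′ ∈ {1, f1, f0, f0²}; or (iii) f1^(p₁) s′ with p₁ ≥ 0 and s′ ∈ {f1, f0, f0²}. (Here 1 denotes the empty factor, i.e. the identity transformation.) -/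

import Mathlib

/-- The sequence of states visited by a Mealy automaton with transition function `tr`,
started at state `q`, while reading the infinite word `u`. -/
def stateSeq {X Q : Type*} (tr : X → Q → Q) (q : Q) (u : ℕ → X) : ℕ → Q
  | 0 => q
  | k + 1 => tr (u k) (stateSeq tr q u k)

/-- The automatic transformation of infinite words defined by the Mealy automaton with
transition function `tr` and output function `out` at the state `q`. -/
def autTrans {X Q : Type*} (tr : X → Q → Q) (out : X → Q → X) (q : Q) (u : ℕ → X) : ℕ → X :=
  fun n => out (u n) (stateSeq tr q u n)

/-- The transformation given by a word of states: the product (composition, applied from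
right to left) of the corresponding automatic transformations. -/
def wordTrans {X Q : Type*} (tr : X → Q → Q) (out : X → Q → X) (w : List Q) :
    (ℕ → X) → (ℕ → X) :=
  (w.map (autTrans tr out)).foldr (· ∘ ·) id

/-- The growth function of a Mealy automaton: `growth tr out n` is the number of distinct
transformations of infinite words obtained as compositions of exactly `n` automatic
transformations of the automaton. -/
noncomputable def growth {X Q : Type*} (tr : X → Q → Q) (out : X → Q → X) (n : ℕ) : ℕ :=
  Set.ncard { g : (ℕ → X) → (ℕ → X) | ∃ w : List Q, w.length = n ∧ wordTrans tr out w = g }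

/-- The `i`-th finite difference of a function `γ`. -/
def fdiff (γ : ℕ → ℤ) : ℕ → ℕ → ℤ
  | 0, n => γ n
  | i + 1, n => fdiff γ i n - fdiff γ i (n - 1)

/-- Output function of the automaton `A₄`: at `q0` the outputs of `(x0,x1,x2,x3)` are
`(x0,x0,x1,x1)`; at `q1` they are `(x2,x3,x0,x1)`. -/
def a4Out : Fin 4 → Fin 2 → Fin 4 := fun x q =>
  if q = 0 then (if x = 0 then 0 else if x = 1 then 0 else 1)
  else (if x = 0 then 2 else if x = 1 then 3 else if x = 2 then 0 else 1)

/-- Transition function of the automaton `A₄`: all transitions from `q0` stay at `q0`;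
from `q1` the transition goes to `q0` on reading `x0` and stays at `q1` otherwise. -/
def a4Tr : Fin 4 → Fin 2 → Fin 2 := fun x q =>
  if q = 0 then 0 else (if x = 0 then 0 else 1)

/-- The automatic transformations `f0, f1` of the automaton `A₄` at states `q0, q1`. -/
def a4F (q : Fin 2) : (ℕ → Fin 4) → (ℕ → Fin 4) := autTrans a4Tr a4Out q

/-!
Prepending one generator at a time, every product of `f₀, f₁` is brought to normal form
with the relations
`f₀ f₀ s = f₀ f₀`, `f₁ f₀ f₁³ = f₁ f₀ f₁`, `f₁ f₀ f₁² f₀ = f₁ f₀ f₀` and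
`f₀ f₁^(2j+1) f₀ = f₀ f₁ f₀`.
The first holds because `f₀` writes only `x0, x1` and sends both to `x0`. The two relations
between fixed words are checked by a finite bisimulation of the automaton whose states are words
of states. For the last, `f₀ v` is a word over `x0, x1`; if its first `x0` is at position `N`,
then `f₁^(2j+1)` sends it to `x3^N x2 x1^j x0^ω` (`word3210 N j`), otherwise to `x3^ω`, and
`f₀` forgets `j`.
-/

section Cascade

variable {X Q : Type*}

theorem stateSeq_of_forall_tr_eq {tr : X → Q → Q} {q : Q} (hq : ∀ x, tr x q = q)
    (u : ℕ → X) (n : ℕ) : stateSeq tr q u n = q := by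
  induction n with
  | zero => rfl
  | succ n ih => rw [stateSeq, ih, hq]

theorem autTrans_eq_of_bisim {tr : X → Q → Q} {out : X → Q → X} (R : Q → Q → Prop)
    (hR : ∀ s t, R s t → ∀ x, out x s = out x t ∧ R (tr x s) (tr x t)) {s t : Q}
    (hst : R s t) : autTrans tr out s = autTrans tr out t := by
  funext u n
  have hrel : ∀ n, R (stateSeq tr s u n) (stateSeq tr t u n) := by
    intro n
    induction n with
    | zero => exact hst
    | succ n ih => exact (hR _ _ ih (u n)).2
  exact (hR _ _ (hrel n) (u n)).1

variable (tr : X → Q → Q) (out : X → Q → X)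

/- The composite of the automatic transformations at the states of a word `w` is the automatic
transformation at `w` of an automaton with state set `List Q`: a letter passes through the
states of `w` from the last to the first, each of which moves on. -/
def wordOut (x : X) : List Q → X
  | [] => x
  | q :: w => out (wordOut x w) q

def wordTr (x : X) : List Q → List Q
  | [] => []
  | q :: w => tr (wordOut out x w) q :: wordTr x w

theorem stateSeq_wordTr_cons (q : Q) (w : List Q) (u : ℕ → X) (n : ℕ) :
    stateSeq (wordTr tr out) (q :: w) u n =
      stateSeq tr q (autTrans (wordTr tr out) (wordOut out) w u) n ::
        stateSeq (wordTr tr out) w u n := by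
  induction n with
  | zero => rfl
  | succ n ih => rw [stateSeq, ih, wordTr]; rfl

theorem wordTrans_eq_autTrans (w : List Q) :
    wordTrans tr out w = autTrans (wordTr tr out) (wordOut out) w := by
  induction w with
  | nil =>
    funext u n
    simp only [autTrans, stateSeq_of_forall_tr_eq (fun _ => rfl : ∀ x, wordTr tr out x [] = [])]
    rfl
  | cons q w ih =>
    funext u n
    change autTrans tr out q (wordTrans tr out w u) n = _
    rw [ih]
    simp only [autTrans, stateSeq_wordTr_cons, wordOut]

theorem wordTrans_eq_of_bisim (R : List (List Q × List Q))
    (hR : ∀ p ∈ R, ∀ x, wordOut out x p.1 = wordOut out x p.2 ∧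
      (wordTr tr out x p.1, wordTr tr out x p.2) ∈ R)
    {w w' : List Q} (hw : (w, w') ∈ R) : wordTrans tr out w = wordTrans tr out w' := by
  rw [wordTrans_eq_autTrans, wordTrans_eq_autTrans]
  exact autTrans_eq_of_bisim (fun v v' => (v, v') ∈ R) (fun v v' h => hR (v, v') h) hw

end Cascade

local notation "f₀" => a4F 0
local notation "f₁" => a4F 1
local notation "WordMap" => (ℕ → Fin 4) → (ℕ → Fin 4)

/- The bisimulations below consist of the pairs of state words reachable from the pair of
words to be compared. -/
theorem f1_f0_f1_pow_three (X : WordMap) : f₁ ∘ f₀ ∘ f₁ ∘ f₁ ∘ f₁ ∘ X = f₁ ∘ f₀ ∘ f₁ ∘ X :=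
  congrArg (· ∘ X) <| wordTrans_eq_of_bisim (w := [1, 0, 1, 1, 1]) (w' := [1, 0, 1]) a4Tr a4Out
    [([0,0,0,0,0], [0,0,0]), ([0,0,0,0,1], [0,0,1]), ([0,0,0,1,0], [0,0,0]),
     ([0,0,1,0,0], [0,0,0]), ([0,0,1,0,1], [0,0,1]), ([0,0,1,1,1], [0,0,1]),
     ([1,0,0,1,0], [1,0,0]), ([1,0,1,1,1], [1,0,1])] (by decide) (by decide)

theorem f1_f0_f1_sq_f0 (X : WordMap) : f₁ ∘ f₀ ∘ f₁ ∘ f₁ ∘ f₀ ∘ X = f₁ ∘ f₀ ∘ f₀ ∘ X :=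
  congrArg (· ∘ X) <| wordTrans_eq_of_bisim (w := [1, 0, 1, 1, 0]) (w' := [1, 0, 0]) a4Tr a4Out
    [([0,0,0,0,0], [0,0,0]), ([0,0,1,0,0], [0,0,0]),
     ([0,0,1,1,0], [0,0,0]), ([1,0,1,1,0], [1,0,0])] (by decide) (by decide)

theorem f1_f0_f1_pow_even {j : ℕ} (hj : 1 ≤ j) (X : WordMap) :
    f₁ ∘ f₀ ∘ f₁^[2 * j] ∘ X = f₁ ∘ f₀ ∘ f₁ ∘ f₁ ∘ X := by
  induction j, hj using Nat.le_induction generalizing X with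
  | base => rfl
  | succ j _ ih =>
    rw [Nat.mul_succ, Function.iterate_add]
    exact (ih (f₁^[2] ∘ X)).trans (f1_f0_f1_pow_three (f₁ ∘ X))

theorem stateSeq_a4Tr_one (u : ℕ → Fin 4) (n : ℕ) :
    stateSeq a4Tr 1 u n = if ∃ k < n, u k = 0 then 0 else 1 := by
  induction n with
  | zero => simp [stateSeq]
  | succ n ih =>
    simp only [stateSeq, ih, Nat.lt_succ_iff_lt_or_eq, or_and_right, exists_or, exists_eq_left]
    by_cases h : ∃ k < n, u k = 0 <;> by_cases h' : u n = 0 <;> simp [h, h', a4Tr]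

theorem a4F_zero_apply (u : ℕ → Fin 4) (n : ℕ) : f₀ u n = a4Out (u n) 0 := by
  rw [a4F, autTrans, stateSeq_of_forall_tr_eq (fun _ => rfl)]

theorem a4F_one_apply (u : ℕ → Fin 4) (n : ℕ) :
    f₁ u n = a4Out (u n) (if ∃ k < n, u k = 0 then 0 else 1) := by
  rw [a4F, autTrans, stateSeq_a4Tr_one]

theorem a4F_zero_apply_le_one (u : ℕ → Fin 4) (n : ℕ) : f₀ u n ≤ 1 := by
  rw [a4F_zero_apply]
  generalize u n = x
  fin_cases x <;> decide

theorem a4F_zero_a4F_zero (u : ℕ → Fin 4) : f₀ (f₀ u) = 0 := by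
  funext n
  rw [a4F_zero_apply, a4F_zero_apply]
  generalize u n = x
  fin_cases x <;> rfl

theorem f0_sq_comp (X : WordMap) : f₀ ∘ f₀ ∘ X = f₀ ∘ f₀ :=
  funext fun u => by simp only [Function.comp_apply, a4F_zero_a4F_zero]

def word3210 (N j : ℕ) : ℕ → Fin 4 := fun n =>
  if n < N then 3 else if n = N then 2 else if n ≤ N + j then 1 else 0

def word1032 (N j : ℕ) : ℕ → Fin 4 := fun n =>
  if n < N then 1 else if n = N then 0 else if n ≤ N + j then 3
  else if n = N + j + 1 then 2 else 0

theorem a4F_one_word3210 (N j : ℕ) : f₁ (word3210 N j) = word1032 N j := by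
  have hzero : ∀ n, (∃ k < n, word3210 N j k = 0) ↔ N + j + 1 < n := by
    refine fun n => ⟨fun ⟨k, hk, h⟩ => ?_, fun h => ⟨N + j + 1, h, ?_⟩⟩
    · simp only [word3210] at h
      split_ifs at h <;> omega
    · simp only [word3210]
      split_ifs <;> first | rfl | omega
  funext n
  simp only [a4F_one_apply, hzero]
  simp only [word3210, word1032]
  split_ifs <;> first | rfl | omega

theorem a4F_one_word1032 (N j : ℕ) : f₁ (word1032 N j) = word3210 N (j + 1) := by
  have hzero : ∀ n, (∃ k < n, word1032 N j k = 0) ↔ N < n := by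
    refine fun n => ⟨fun ⟨k, hk, h⟩ => ?_, fun h => ⟨N, h, by simp [word1032]⟩⟩
    simp only [word1032] at h
    split_ifs at h <;> omega
  funext n
  simp only [a4F_one_apply, hzero]
  simp only [word3210, word1032]
  split_ifs <;> first | rfl | omega

theorem a4F_zero_word3210 (N j : ℕ) : f₀ (word3210 N j) = f₀ (word3210 N 0) := by
  funext n
  simp only [a4F_zero_apply, word3210]
  split_ifs <;> rfl

theorem a4F_one_eq_word3210 {z : ℕ → Fin 4} (hz : ∀ n, z n ≤ 1) {N : ℕ} (hN : z N = 0)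
    (hlt : ∀ k < N, z k ≠ 0) : f₁ z = word3210 N 0 := by
  have hzero : ∀ n, (∃ k < n, z k = 0) ↔ N < n := fun n =>
    ⟨fun ⟨k, hk, h⟩ => by by_contra! h'; exact hlt k (by omega) h, fun h => ⟨N, h, hN⟩⟩
  funext n
  have hzn : z n = 0 ∨ z n = 1 := by have := hz n; omega
  simp only [a4F_one_apply, hzero]
  simp only [word3210]
  rcases lt_trichotomy n N with h | rfl | h
  · rw [if_neg h.not_gt, hzn.resolve_left (hlt n h), if_pos h]; rfl
  · simp only [lt_irrefl, if_false, hN, if_true]; rfl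
  · rw [if_pos h, if_neg h.not_gt, if_neg h.ne', if_neg (by omega)]
    rcases hzn with h' | h' <;> rw [h'] <;> rfl

theorem a4F_one_const_one : f₁ (fun _ => 1) = fun _ => 3 := by
  funext n
  rw [a4F_one_apply, if_neg (by simp)]
  rfl

theorem a4F_one_const_three : f₁ (fun _ => 3) = fun _ => 1 := by
  funext n
  rw [a4F_one_apply, if_neg (by simp)]
  rfl

theorem iterate_f1_sq_word3210 (N j : ℕ) : (f₁^[2])^[j] (word3210 N 0) = word3210 N j := by
  induction j with
  | zero => rfl
  | succ j ih =>
    rw [Function.iterate_succ_apply', ih]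
    change f₁ (f₁ _) = _
    rw [a4F_one_word3210, a4F_one_word1032]

theorem f0_f1_pow_odd_f0 (j : ℕ) (X : WordMap) :
    f₀ ∘ f₁^[2 * j + 1] ∘ f₀ ∘ X = f₀ ∘ f₁ ∘ f₀ ∘ X := by
  funext u
  simp only [Function.comp_apply, Function.iterate_succ_apply, Function.iterate_mul]
  generalize X u = v
  by_cases hex : ∃ N, f₀ v N = 0
  · have hfirst : f₁ (f₀ v) = word3210 (Nat.find hex) 0 :=
      a4F_one_eq_word3210 (a4F_zero_apply_le_one v) (Nat.find_spec hex)
        fun _ hk => Nat.find_min hex hk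
    rw [hfirst, iterate_f1_sq_word3210, a4F_zero_word3210]
  · simp only [not_exists] at hex
    have hone : f₀ v = fun _ => 1 :=
      funext fun n => by have := a4F_zero_apply_le_one v n; have := hex n; omega
    have hfix : f₁^[2] (fun _ => 3) = fun _ => 3 := by
      change f₁ (f₁ _) = _
      rw [a4F_one_const_three, a4F_one_const_one]
    rw [hone, a4F_one_const_one, Function.iterate_fixed hfix]

theorem ne_id_of_mem_f1_f0_f0sq {s : WordMap} (hs : s ∈ ({f₁, f₀, f₀ ∘ f₀} : Set WordMap)) :
    s ≠ id := by
  rcases hs with rfl | rfl | rfl <;> intro h <;>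
    have := congrFun (congrFun h fun _ => 2) 0 <;> revert this <;> decide

def IsA4NormalForm (s : WordMap) : Prop :=
  (∃ p₁ p₂ : ℕ, 1 ≤ p₁ ∧ ∃ s' ∈ ({id, f₁, f₀, f₀ ∘ f₀} : Set WordMap),
      ¬(p₁ = 1 ∧ p₂ = 0 ∧ s' = id) ∧ s = f₀ ∘ f₁^[2 * p₁] ∘ (f₀ ∘ f₁)^[p₂] ∘ s') ∨
  (∃ p₁ p₂ : ℕ, 1 ≤ p₂ ∧ ∃ s' ∈ ({id, f₁, f₀, f₀ ∘ f₀} : Set WordMap),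
      s = f₁^[p₁] ∘ (f₀ ∘ f₁)^[p₂] ∘ s') ∨
  (∃ p₁ : ℕ, ∃ s' ∈ ({f₁, f₀, f₀ ∘ f₀} : Set WordMap), s = f₁^[p₁] ∘ s')

theorem isA4NormalForm_a4F (q : Fin 2) : IsA4NormalForm (a4F q) := by
  refine .inr (.inr ⟨0, a4F q, ?_, rfl⟩)
  fin_cases q <;> simp

theorem isA4NormalForm_f0_f0_comp (X : WordMap) : IsA4NormalForm (f₀ ∘ f₀ ∘ X) :=
  .inr <| .inr ⟨0, f₀ ∘ f₀, by simp, f0_sq_comp X⟩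

theorem isA4NormalForm_f1_f0_f1_f1_comp (p₂ : ℕ) {s' : WordMap}
    (hs' : s' ∈ ({id, f₁, f₀, f₀ ∘ f₀} : Set WordMap)) :
    IsA4NormalForm (f₁ ∘ f₀ ∘ f₁ ∘ f₁ ∘ (f₀ ∘ f₁)^[p₂] ∘ s') := by
  have hf0 (X : WordMap) : IsA4NormalForm (f₁ ∘ f₀ ∘ f₁ ∘ f₁ ∘ f₀ ∘ X) := by
    rw [f1_f0_f1_sq_f0, f0_sq_comp]
    exact .inr <| .inr ⟨1, f₀ ∘ f₀, by simp, rfl⟩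
  rcases p₂ with _ | m
  · rcases hs' with rfl | rfl | rfl | rfl
    · exact .inr <| .inl ⟨1, 1, le_rfl, f₁, by simp, rfl⟩
    · exact .inr <| .inl ⟨1, 1, le_rfl, id, by simp, f1_f0_f1_pow_three id⟩
    · exact hf0 id
    · exact hf0 f₀
  · rw [Function.iterate_succ']
    exact hf0 _

theorem IsA4NormalForm.f1_comp {s : WordMap} (hs : IsA4NormalForm s) :
    IsA4NormalForm (f₁ ∘ s) := by
  rcases hs with ⟨p₁, p₂, hp₁, s', hs', -, rfl⟩ | ⟨p₁, p₂, hp₂, s', hs', rfl⟩ | ⟨p₁, s', hs', rfl⟩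
  · rw [f1_f0_f1_pow_even hp₁]
    exact isA4NormalForm_f1_f0_f1_f1_comp p₂ hs'
  · exact .inr <| .inl ⟨p₁ + 1, p₂, hp₂, s', hs', by rw [Function.iterate_succ']; rfl⟩
  · exact .inr <| .inr ⟨p₁ + 1, s', hs', by rw [Function.iterate_succ']; rfl⟩

theorem isA4NormalForm_f0_f1_pow_f0f1_pow (k : ℕ) {p₂ : ℕ} (hp₂ : 1 ≤ p₂) {s' : WordMap}
    (hs' : s' ∈ ({id, f₁, f₀, f₀ ∘ f₀} : Set WordMap)) :
    IsA4NormalForm (f₀ ∘ f₁^[k] ∘ (f₀ ∘ f₁)^[p₂] ∘ s') := by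
  obtain ⟨m, rfl⟩ : ∃ m, p₂ = m + 1 := ⟨p₂ - 1, by omega⟩
  rcases Nat.even_or_odd' k with ⟨j, rfl | rfl⟩
  · rcases j with _ | i
    · rw [Function.iterate_succ']
      exact isA4NormalForm_f0_f0_comp (f₁ ∘ (f₀ ∘ f₁)^[m] ∘ s')
    · exact .inl ⟨i + 1, m + 1, by omega, s', hs', by omega, rfl⟩
  · refine .inr <| .inl ⟨0, m + 2, by omega, s', hs', ?_⟩
    calc f₀ ∘ f₁^[2 * j + 1] ∘ (f₀ ∘ f₁)^[m + 1] ∘ s'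
        = f₀ ∘ f₁^[2 * j + 1] ∘ f₀ ∘ f₁ ∘ (f₀ ∘ f₁)^[m] ∘ s' := by
          rw [Function.iterate_succ' (f₀ ∘ f₁)]; rfl
      _ = f₀ ∘ f₁ ∘ f₀ ∘ f₁ ∘ (f₀ ∘ f₁)^[m] ∘ s' := f0_f1_pow_odd_f0 j _
      _ = f₁^[0] ∘ (f₀ ∘ f₁)^[m + 2] ∘ s' := by
          rw [Function.iterate_succ', Function.iterate_succ']; rfl

theorem isA4NormalForm_f0_f1_pow (k : ℕ) {s' : WordMap}
    (hs' : s' ∈ ({f₁, f₀, f₀ ∘ f₀} : Set WordMap)) : IsA4NormalForm (f₀ ∘ f₁^[k] ∘ s') := by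
  rcases Nat.even_or_odd' k with ⟨j, rfl | rfl⟩
  · rcases j with _ | i
    · rcases hs' with rfl | rfl | rfl
      · exact .inr <| .inl ⟨0, 1, le_rfl, id, by simp, rfl⟩
      · exact isA4NormalForm_f0_f0_comp id
      · exact isA4NormalForm_f0_f0_comp f₀
    · exact .inl ⟨i + 1, 0, by omega, s', Set.mem_insert_of_mem _ hs',
        fun h => ne_id_of_mem_f1_f0_f0sq hs' h.2.2, rfl⟩
  · rcases hs' with rfl | rfl | rfl
    · rcases j with _ | i
      · exact .inr <| .inl ⟨0, 1, le_rfl, f₁, by simp, rfl⟩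
      · refine .inl ⟨i + 2, 0, by omega, id, by simp, by omega, ?_⟩
        rw [← Function.iterate_succ (a4F 1)]
        rfl
    · exact .inr <| .inl ⟨0, 1, le_rfl, f₀, by simp, f0_f1_pow_odd_f0 j id⟩
    · exact .inr <| .inl ⟨0, 1, le_rfl, f₀ ∘ f₀, by simp, f0_f1_pow_odd_f0 j f₀⟩

theorem IsA4NormalForm.f0_comp {s : WordMap} (hs : IsA4NormalForm s) :
    IsA4NormalForm (f₀ ∘ s) := by
  rcases hs with ⟨p₁, p₂, -, s', -, -, rfl⟩ | ⟨p₁, p₂, hp₂, s', hs', rfl⟩ | ⟨p₁, s', hs', rfl⟩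
  · exact isA4NormalForm_f0_f0_comp _
  · exact isA4NormalForm_f0_f1_pow_f0f1_pow p₁ hp₂ hs'
  · exact isA4NormalForm_f0_f1_pow p₁ hs'

theorem isA4NormalForm_wordTrans {w : List (Fin 2)} (hw : w ≠ []) :
    IsA4NormalForm (wordTrans a4Tr a4Out w) := by
  induction w with
  | nil => exact absurd rfl hw
  | cons q w ih =>
    rcases eq_or_ne w [] with rfl | hw'
    · exact isA4NormalForm_a4F q
    · change IsA4NormalForm (a4F q ∘ wordTrans a4Tr a4Out w)
      fin_cases q
      · exact (ih hw').f0_comp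
      · exact (ih hw').f1_comp

/-- Normal form for the semigroup `S_{A₄}`: every element of the semigroup generated by the
automatic transformations `f0, f1` of `A₄` (i.e. every composition of a nonempty word in
`f0, f1`) equals, as a transformation, a word of one of the forms
`f0 f1^(2p₁) (f0 f1)^(p₂) s′` with `p₁ ≥ 1`, `p₂ ≥ 0`, `s′ ∈ {1, f1, f0, f0²}`, excluding
`p₁ = 1 ∧ p₂ = 0 ∧ s′ = 1`; or `f1^(p₁) (f0 f1)^(p₂) s′` with `p₁ ≥ 0`, `p₂ ≥ 1`,
`s′ ∈ {1, f1, f0, f0²}`; or `f1^(p₁) s′` with `p₁ ≥ 0`, `s′ ∈ {f1, f0, f0²}`. -/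
theorem normal_form_a4 :
    ∀ w : List (Fin 2), w ≠ [] →
      (∃ p₁ p₂ : ℕ, 1 ≤ p₁ ∧
        ∃ s' ∈ ({id, a4F 1, a4F 0, a4F 0 ∘ a4F 0} :
            Set ((ℕ → Fin 4) → (ℕ → Fin 4))),
          ¬(p₁ = 1 ∧ p₂ = 0 ∧ s' = id) ∧
          wordTrans a4Tr a4Out w =
            a4F 0 ∘ (a4F 1)^[2 * p₁] ∘ (a4F 0 ∘ a4F 1)^[p₂] ∘ s') ∨
      (∃ p₁ p₂ : ℕ, 1 ≤ p₂ ∧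
        ∃ s' ∈ ({id, a4F 1, a4F 0, a4F 0 ∘ a4F 0} :
            Set ((ℕ → Fin 4) → (ℕ → Fin 4))),
          wordTrans a4Tr a4Out w = (a4F 1)^[p₁] ∘ (a4F 0 ∘ a4F 1)^[p₂] ∘ s') ∨
      (∃ p₁ : ℕ,
        ∃ s' ∈ ({a4F 1, a4F 0, a4F 0 ∘ a4F 0} :
            Set ((ℕ → Fin 4) → (ℕ → Fin 4))),
          wordTrans a4Tr a4Out w = (a4F 1)^[p₁] ∘ s') :=
  fun _ hw => isA4NormalForm_wordTrans hw
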